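/- In the slice process (the 2D majority rule model with $2 \times 2$ hyperedges restricted to the slice $S_3 = \mathbb{Z} \times \{-1,0,1\}$ with the monotone right-boundary modification), the drift of the sum $\Sigma_t = X_t(-1) + X_t(0) + X_t(1)$ satisfies $D(\Sigma_t) = 2(N(X_t) - 1)$ where $N(X_t) = \mathbf{1}\{|X_t^+| \neq 1\} + \mathbf{1}\{|X_t^-| \neq 1\}$, $X_t^+ = X_t(1) - X_t(0)$ and $X_t^- = X_t(-1) - X_t(0)$. -/

import Mathlib

/-- Configuration of the slice process determined by the rightmost-1 positions `X`:
vertex `(v₁, v₂)` is in state 1 iff `|v₂| ≤ 1` (the vertex lies in the slice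
`S₃ = ℤ × {-1,0,1}`) and `v₁ ≤ X v₂`. -/
def sliceState (X : ℤ → ℤ) (v : ℤ × ℤ) : Bool := decide (|v.2| ≤ 1 ∧ v.1 ≤ X v.2)

/-- Number of state-1 vertices in the `2 × 2` square with lower-left corner `p`. -/
noncomputable def sliceOnes (X : ℤ → ℤ) (p : ℤ × ℤ) : ℕ :=
  ((Finset.Icc p (p + (1, 1))).filter fun v => sliceState X v = true).card

/-- Effect on the rightmost-1 positions of the majority rule update (ties going to state 1)
of the `2 × 2` square with lower-left corner `p`, with the two modifications defining the
slice process: vertices outside the slice are frozen in state 0 (so a square is filled with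
1's only if it lies in the slice, i.e. `p.2 ∈ {-1, 0}`) and updates placing a 1 to the right
of a 0 in the same row are suppressed (the square is filled with 1's only if every vertex to
its left in both of its rows is in state 1, i.e. `X r ≥ p.1 - 1` for both rows). -/
noncomputable def sliceUpdate (X : ℤ → ℤ) (p : ℤ × ℤ) : ℤ → ℤ :=
  if sliceOnes X p < 2 then
    fun r => if r = p.2 ∨ r = p.2 + 1 then min (X r) (p.1 - 1) else X r
  else if (p.2 = -1 ∨ p.2 = 0) ∧ p.1 - 1 ≤ X p.2 ∧ p.1 - 1 ≤ X (p.2 + 1) then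
    fun r => if r = p.2 ∨ r = p.2 + 1 then max (X r) (p.1 + 1) else X r
  else X

/-- The sum `Σ = X(-1) + X(0) + X(1)` of the three rightmost-1 positions. -/
def sliceSum (X : ℤ → ℤ) : ℤ := X (-1) + X 0 + X 1

/-- The drift `D(Σ)` of the sum: since every `2 × 2` square is updated at rate one, it is the
sum over all squares of the change of `Σ` produced by the update of that square. -/
noncomputable def sumDrift (X : ℤ → ℤ) : ℤ :=
  ∑ᶠ p : ℤ × ℤ, (sliceSum (sliceUpdate X p) - sliceSum X)

/-! Only squares meeting the slice change `Σ`. A square straddling its boundary holds at most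
two 1's and cannot be filled, so it can only erase the last 1 of its slice row: each boundary row
contributes `-1`. A square inside the slice acts on two adjacent rows with rightmost 1's at
`x ≤ y`: the lower row advances by one column at `a = x` and by two at `a = x + 1` (if
`y ≥ x + 2`), while at `a = y` the higher row advances (if `x = y`) or retreats by one. Summed
over the columns this is `0` when `|x - y| = 1` and `2` otherwise. -/

open Function

theorem finsum_ite_eq {α M : Type*} [DecidableEq α] [AddCommMonoid M] (a : α) (b : M) :
    ∑ᶠ x, (if x = a then b else 0) = b := by
  rw [finsum_eq_single _ a fun x hx => if_neg hx, if_pos rfl]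

theorem hasFiniteSupport_ite_eq {α M : Type*} [DecidableEq α] [Zero M] (a : α) (b : M) :
    HasFiniteSupport fun x => if x = a then b else 0 :=
  (Set.finite_singleton a).subset fun _ hx => by_contra fun h => hx (if_neg h)

theorem finsum_prod_eq_sum_finsum {α β M : Type*} [AddCommMonoid M] {f : α × β → M}
    (s : Finset β) (hs : ∀ a b, b ∉ s → f (a, b) = 0)
    (hf : ∀ b ∈ s, HasFiniteSupport fun a => f (a, b)) :
    ∑ᶠ p, f p = ∑ b ∈ s, ∑ᶠ a, f (a, b) := by
  have hfin : HasFiniteSupport f := by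
    refine ((s.finite_toSet.biUnion hf).prod s.finite_toSet).subset ?_
    rintro ⟨a, b⟩ hab
    have hb : b ∈ s := by_contra fun hb => hab (hs a b hb)
    exact ⟨Set.mem_biUnion hb hab, hb⟩
  rw [finsum_curry f hfin, ← finsum_sum_comm s (fun a b => f (a, b)) hf]
  refine finsum_congr fun a => finsum_eq_sum_of_support_subset _ fun b hb => ?_
  exact by_contra fun h => hb (hs a b h)

/-- The number of 1's in columns `a, a + 1` of a row whose rightmost 1 is at `x`. -/
def rowOnes (x a : ℤ) : ℕ := (if a ≤ x then 1 else 0) + (if a + 1 ≤ x then 1 else 0)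

/-- The change of `x + y` when the square at column `a` is updated on two adjacent rows of the
slice whose rightmost 1's are at `x` and `y`. -/
def pairChange (x y a : ℤ) : ℤ :=
  if rowOnes x a + rowOnes y a < 2 then (min x (a - 1) - x) + (min y (a - 1) - y)
  else if a - 1 ≤ x ∧ a - 1 ≤ y then (max x (a + 1) - x) + (max y (a + 1) - y)
  else 0

theorem pairChange_comm (x y a : ℤ) : pairChange x y a = pairChange y x a := by
  unfold pairChange
  rw [add_comm (rowOnes x a), add_comm (min x _ - x), add_comm (max x _ - x)]
  simp only [and_comm]

theorem pairChange_of_le {x y : ℤ} (h : x ≤ y) (a : ℤ) : pairChange x y a =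
    (if a = x then 1 else 0) + (if a = x + 1 ∧ x + 2 ≤ y then 2 else 0) +
      (if a = y then (if x = y then 1 else -1) else 0) := by
  unfold pairChange rowOnes
  split_ifs <;> omega

theorem support_pairChange_subset (x y : ℤ) :
    support (pairChange x y) ⊆ ({x, x + 1, y, y + 1} : Finset ℤ) := by
  intro a ha
  simp only [Finset.coe_insert, Finset.coe_singleton, Set.mem_insert_iff,
    Set.mem_singleton_iff]
  contrapose! ha
  rw [notMem_support]
  unfold pairChange rowOnes
  split_ifs <;> omega

theorem hasFiniteSupport_pairChange (x y : ℤ) : HasFiniteSupport (pairChange x y) :=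
  (Finset.finite_toSet _).subset (support_pairChange_subset x y)

theorem finsum_pairChange (x y : ℤ) :
    ∑ᶠ a, pairChange x y a = if |x - y| = 1 then 0 else 2 := by
  wlog h : x ≤ y generalizing x y
  · simpa only [pairChange_comm, abs_sub_comm] using this y x (le_of_not_ge h)
  rw [finsum_eq_sum_of_support_subset _ (support_pairChange_subset x y)]
  simp only [pairChange_of_le h, Finset.sum_add_distrib, ite_and, Finset.sum_ite_eq',
    Finset.mem_insert, Finset.mem_singleton, true_or, or_true, if_true,
    abs_of_nonpos (sub_nonpos.2 h)]
  split_ifs <;> omega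

theorem Icc_square_eq (a b : ℤ) : Finset.Icc ((a, b) : ℤ × ℤ) ((a, b) + (1, 1)) =
    {(a, b), (a + 1, b), (a, b + 1), (a + 1, b + 1)} := by
  ext ⟨u, v⟩
  simp only [Finset.mem_Icc, Prod.le_def, Prod.mk_add_mk, Finset.mem_insert,
    Finset.mem_singleton, Prod.ext_iff]
  omega

theorem sliceOnes_eq (X : ℤ → ℤ) (a b : ℤ) : sliceOnes X (a, b) =
    (if |b| ≤ 1 then rowOnes (X b) a else 0) +
      (if |b + 1| ≤ 1 then rowOnes (X (b + 1)) a else 0) := by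
  rw [sliceOnes, Finset.card_filter, Icc_square_eq]
  rw [Finset.sum_insert (by simp [Prod.ext_iff]), Finset.sum_insert (by simp [Prod.ext_iff]),
    Finset.sum_insert (by simp [Prod.ext_iff]), Finset.sum_singleton]
  simp only [sliceState, rowOnes, decide_eq_true_eq]
  split_ifs <;> omega

theorem sliceUpdate_apply (X : ℤ → ℤ) (a b r : ℤ) : sliceUpdate X (a, b) r =
    if sliceOnes X (a, b) < 2 then
      if r = b ∨ r = b + 1 then min (X r) (a - 1) else X r
    else if (b = -1 ∨ b = 0) ∧ a - 1 ≤ X b ∧ a - 1 ≤ X (b + 1) then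
      if r = b ∨ r = b + 1 then max (X r) (a + 1) else X r
    else X r := by
  simp only [sliceUpdate, apply_ite (fun f : ℤ → ℤ => f r)]

noncomputable def sliceSumChange (X : ℤ → ℤ) (p : ℤ × ℤ) : ℤ :=
  sliceSum (sliceUpdate X p) - sliceSum X

theorem sliceSumChange_of_mem_slice (X : ℤ → ℤ) (a : ℤ) {b : ℤ} (hb : b = -1 ∨ b = 0) :
    sliceSumChange X (a, b) = pairChange (X b) (X (b + 1)) a := by
  rcases hb with rfl | rfl <;>
  · simp only [sliceSumChange, sliceUpdate_apply, sliceSum, sliceOnes_eq, pairChange]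
    norm_num
    split_ifs <;> omega

theorem sliceSumChange_bottom (X : ℤ → ℤ) (a : ℤ) :
    sliceSumChange X (a, -2) = if a = X (-1) then -1 else 0 := by
  simp only [sliceSumChange, sliceUpdate_apply, sliceSum, sliceOnes_eq, rowOnes]
  norm_num
  split_ifs <;> omega

theorem sliceSumChange_top (X : ℤ → ℤ) (a : ℤ) :
    sliceSumChange X (a, 1) = if a = X 1 then -1 else 0 := by
  simp only [sliceSumChange, sliceUpdate_apply, sliceSum, sliceOnes_eq, rowOnes]
  norm_num
  split_ifs <;> omega

theorem sliceSumChange_of_far (X : ℤ → ℤ) (a : ℤ) {b : ℤ} (hb : b < -2 ∨ 1 < b) :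
    sliceSumChange X (a, b) = 0 := by
  simp only [sliceSumChange, sliceUpdate_apply, sliceSum]
  split_ifs <;> omega

theorem hasFiniteSupport_sliceSumChange (X : ℤ → ℤ) (b : ℤ) :
    HasFiniteSupport fun a => sliceSumChange X (a, b) := by
  by_cases hfar : b < -2 ∨ 1 < b
  · simpa only [sliceSumChange_of_far X _ hfar] using hasFiniteSupport_zero
  obtain rfl | rfl | rfl | rfl : b = -2 ∨ b = -1 ∨ b = 0 ∨ b = 1 := by omega
  · simpa only [sliceSumChange_bottom] using hasFiniteSupport_ite_eq _ _
  · simpa only [sliceSumChange_of_mem_slice X _ (Or.inl rfl)]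
      using hasFiniteSupport_pairChange _ _
  · simpa only [sliceSumChange_of_mem_slice X _ (Or.inr rfl)]
      using hasFiniteSupport_pairChange _ _
  · simpa only [sliceSumChange_top] using hasFiniteSupport_ite_eq _ _

theorem slice_sum_drift_general (X : ℤ → ℤ) :
    sumDrift X =
      2 * (((if |X 1 - X 0| ≠ 1 then 1 else 0) + (if |X (-1) - X 0| ≠ 1 then 1 else 0)) - 1) := by
  have hrows :
      sumDrift X = ∑ b ∈ ({-2, -1, 0, 1} : Finset ℤ), ∑ᶠ a, sliceSumChange X (a, b) := by
    refine finsum_prod_eq_sum_finsum _ (fun a b hb => sliceSumChange_of_far X a ?_)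
      fun b _ => hasFiniteSupport_sliceSumChange X b
    simp only [Finset.mem_insert, Finset.mem_singleton] at hb
    omega
  rw [hrows, Finset.sum_insert (by decide), Finset.sum_insert (by decide),
    Finset.sum_insert (by decide), Finset.sum_singleton]
  simp only [sliceSumChange_bottom, sliceSumChange_top,
    sliceSumChange_of_mem_slice X _ (Or.inl rfl), sliceSumChange_of_mem_slice X _ (Or.inr rfl),
    zero_add, neg_add_cancel, finsum_ite_eq, finsum_pairChange, abs_sub_comm (X 0)]
  split_ifs <;> omega

/-- In the slice process, the drift of `Σ_t = X_t(-1) + X_t(0) + X_t(1)`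
satisfies `D(Σ_t) = 2 (N(X_t) - 1)` where `N(X_t) = 𝟙{|X⁺| ≠ 1} + 𝟙{|X⁻| ≠ 1}`,
`X⁺ = X(1) - X(0)`, `X⁻ = X(-1) - X(0)`.  (The middle coordinate cannot be simultaneously
strictly smaller than the other two.) -/
theorem slice_sum_drift (X : ℤ → ℤ)
    (hmid : ¬ (X 0 < X (-1) ∧ X 0 < X 1)) :
    sumDrift X =
      2 * (((if |X 1 - X 0| ≠ 1 then 1 else 0) + (if |X (-1) - X 0| ≠ 1 then 1 else 0)) - 1) :=
  slice_sum_drift_general X
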